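/- The number of triwords of size n (n ≥ 1) is 2^{n-2} · (n+3). -/

import Mathlib

/-- A triword of size `n`: a word over `{0,1,2}` whose first letter is not `2`
and with no subword `01` (no `i < j` with `u i = 0` and `u j = 1`). -/
def IsTriword {n : ℕ} (u : Fin n → Fin 3) : Prop :=
  (∀ i : Fin n, (i : ℕ) = 0 → u i ≠ 2) ∧
  ∀ i j : Fin n, i < j → u i = 0 → u j ≠ 1

def No01 {n : ℕ} (u : Fin n → Fin 3) : Prop :=
  ∀ i j : Fin n, i < j → u i = 0 → u j ≠ 1

instance {n : ℕ} : DecidablePred (No01 (n := n)) := fun u => by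
  unfold No01; infer_instance

instance {n : ℕ} : DecidablePred (IsTriword (n := n)) := fun u => by
  unfold IsTriword; infer_instance

def splitEquiv {n : ℕ} (P : (Fin (n+1) → Fin 3) → Prop) :
    {u : Fin (n+1) → Fin 3 // P u} ≃ Σ a : Fin 3, {v : Fin n → Fin 3 // P (Fin.cons a v)} :=
  (Equiv.subtypeEquiv (Fin.consEquiv (fun _ => Fin 3)).symm (fun u => by
      simp [Fin.consEquiv])).trans
    (Equiv.subtypeProdEquivSigmaSubtype (fun a v => P (Fin.cons a v)))

lemma no01_cons {n : ℕ} (a : Fin 3) (v : Fin n → Fin 3) :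
    No01 (Fin.cons a v) ↔ No01 v ∧ (a = 0 → ∀ j, v j ≠ 1) := by
  constructor
  · intro h
    refine ⟨fun i j hij h0 => ?_, fun ha j => ?_⟩
    · have := h i.succ j.succ (by simpa using hij)
      simpa using this (by simpa using h0)
    · have := h 0 j.succ (Fin.succ_pos j)
      simpa using this (by simpa using ha)
  · rintro ⟨h1, h2⟩ i j hij h0
    induction j using Fin.cases with
    | zero => exact absurd hij (by simp)
    | succ j' =>
      induction i using Fin.cases with
      | zero =>
        simp only [Fin.cons_zero] at h0
        simpa using h2 h0 j'
      | succ i' =>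
        simp only [Fin.cons_succ] at h0 ⊢
        exact h1 i' j' (by simpa using hij) h0

lemma card_no_ones (n : ℕ) : Nat.card {v : Fin n → Fin 3 // ∀ j, v j ≠ 1} = 2 ^ n := by
  have e : {v : Fin n → Fin 3 // ∀ j, v j ≠ 1} ≃ (Fin n → {b : Fin 3 // b ≠ 1}) :=
    Equiv.subtypePiEquivPi (p := fun _ b => b ≠ 1)
  rw [Nat.card_congr e, Nat.card_fun]
  have : Nat.card {b : Fin 3 // b ≠ 1} = 2 := by
    rw [Nat.card_eq_fintype_card]; decide
  simp [this, Nat.card_eq_fintype_card]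

lemma card_no01 (n : ℕ) :
    2 * Nat.card {u : Fin n → Fin 3 // No01 u} = 2 ^ n * (n + 2) := by
  induction n with
  | zero =>
    have h1 : Nat.card {u : Fin 0 → Fin 3 // No01 u} = 1 := by
      rw [Nat.card_eq_one_iff_unique]
      refine ⟨⟨fun u v => ?_⟩, ⟨⟨fun i => i.elim0, fun i => i.elim0⟩⟩⟩
      ext i; exact i.elim0
    simpa using h1
  | succ n ih =>
    rw [Nat.card_congr (splitEquiv (No01 (n := n + 1))), Nat.card_eq_fintype_card,
      Fintype.card_sigma, Fin.sum_univ_three]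
    have e0 : {v : Fin n → Fin 3 // No01 (Fin.cons 0 v)} ≃ {v : Fin n → Fin 3 // ∀ j, v j ≠ 1} :=
      Equiv.subtypeEquivRight (fun v => by
        rw [no01_cons]
        constructor
        · rintro ⟨_, h⟩; exact h rfl
        · intro h; exact ⟨fun i j _ _ => h j, fun _ => h⟩)
    have e1 : {v : Fin n → Fin 3 // No01 (Fin.cons 1 v)} ≃ {v : Fin n → Fin 3 // No01 v} :=
      Equiv.subtypeEquivRight (fun v => by rw [no01_cons]; simp)
    have e2 : {v : Fin n → Fin 3 // No01 (Fin.cons 2 v)} ≃ {v : Fin n → Fin 3 // No01 v} :=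
      Equiv.subtypeEquivRight (fun v => by rw [no01_cons]; simp)
    rw [← Nat.card_eq_fintype_card, ← Nat.card_eq_fintype_card, ← Nat.card_eq_fintype_card,
      Nat.card_congr e0, Nat.card_congr e1, Nat.card_congr e2, card_no_ones]
    ring_nf
    ring_nf at ih
    omega

lemma triword_cons {n : ℕ} (a : Fin 3) (v : Fin n → Fin 3) :
    IsTriword (Fin.cons a v) ↔ a ≠ 2 ∧ No01 (Fin.cons a v) := by
  constructor
  · rintro ⟨h1, h2⟩
    exact ⟨by simpa using h1 0 rfl, h2⟩
  · rintro ⟨h1, h2⟩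
    refine ⟨fun i hi => ?_, h2⟩
    have : i = 0 := Fin.ext hi
    subst this
    simpa using h1

/-- The number of triwords of size `n ≥ 1` is `2^(n-2) * (n+3)`
(stated multiplied by `4` to avoid natural subtraction in the exponent). -/
theorem card_triwords (n : ℕ) (hn : 1 ≤ n) :
    4 * Nat.card {u : Fin n → Fin 3 // IsTriword u} = 2 ^ n * (n + 3) := by
  rcases n with _ | m
  · omega
  rw [Nat.card_congr (splitEquiv (IsTriword (n := m + 1))), Nat.card_eq_fintype_card,
    Fintype.card_sigma, Fin.sum_univ_three]
  have e0 : {v : Fin m → Fin 3 // IsTriword (Fin.cons 0 v)} ≃ {v : Fin m → Fin 3 // ∀ j, v j ≠ 1} :=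
    Equiv.subtypeEquivRight (fun v => by
      rw [triword_cons, no01_cons]
      constructor
      · rintro ⟨-, -, h⟩; exact h rfl
      · intro h; exact ⟨by decide, ⟨fun i j _ _ => h j, fun _ => h⟩⟩)
  have e1 : {v : Fin m → Fin 3 // IsTriword (Fin.cons 1 v)} ≃ {v : Fin m → Fin 3 // No01 v} :=
    Equiv.subtypeEquivRight (fun v => by rw [triword_cons, no01_cons]; simp)
  have h2 : IsEmpty {v : Fin m → Fin 3 // IsTriword (Fin.cons 2 v)} := by
    refine ⟨fun ⟨v, hv⟩ => ?_⟩
    rw [triword_cons] at hv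
    exact hv.1 rfl
  rw [← Nat.card_eq_fintype_card, ← Nat.card_eq_fintype_card, ← Nat.card_eq_fintype_card,
    Nat.card_congr e0, Nat.card_congr e1, card_no_ones,
    show Nat.card {v : Fin m → Fin 3 // IsTriword (Fin.cons 2 v)} = 0 from
      @Nat.card_of_isEmpty _ h2]
  rw [show ∀ B : ℕ, 4 * (2 ^ m + B + 0) = 2 ^ m * 4 + 2 * (2 * B) from fun B => by ring,
    card_no01 m, pow_succ]
  ring
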